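/- Let (X, λ) be a finite measure space, φ₁,…,φ_{2n} : X → ℂ integrable functions, and ε : X × X → ℂ a bounded antisymmetric kernel (ε(x,y) = -ε(y,x)). Define the 2n×2n antisymmetric matrix M by M_{jk} = ∫∫ φ_j(x) ε(x,y) φ_k(y) dλ(x) dλ(y). Then ∫_{X^{2n}} det(φ_j(x_k))_{j,k=1}^{2n} · pf(ε(x_j,x_k))_{j,k=1}^{2n} dλ^{⊗2n}(x₁,…,x_{2n}) = (2n)! · pf(M). -/

import Mathlib

/-!
Write `pf (ε(x_j, x_k))` as a sum over pairings `σ`. The substitution `x ↦ x ∘ σ` changes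
`det (φ_j(x_k))` by `sign σ`, so every pairing contributes the same integral
`∫ det (φ_j(x_k)) ∏ᵢ ε(x_{2i}, x_{2i+1})`. Expanding that determinant, Fubini splits each of its
terms into a product of entries of `M`, giving `∑_τ sign τ ∏ᵢ M_{τ(2i), τ(2i+1)}`. Every
permutation is uniquely a pairing followed by a permutation of the pairs and flips inside pairs,
and for antisymmetric `M` those do not change the summand; so the sum is `n! 2ⁿ pf M`, and
`#pairings · n! 2ⁿ = (2n)!`.
-/

open Finset Matrix MeasureTheory

/-- The Pfaffian of a `2n × 2n` matrix, defined as the signed sum over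
partitions of `{0, …, 2n-1}` into pairs `{i₁,j₁},…,{iₙ,jₙ}` with `iₖ < jₖ`. -/
def pf {R : Type*} [CommRing R] {n : ℕ} (A : Matrix (Fin (2 * n)) (Fin (2 * n)) R) : R :=
  ∑ σ ∈ Finset.univ.filter (fun σ : Equiv.Perm (Fin (2 * n)) =>
      (∀ i : Fin n, σ ⟨2 * i, by have := i.isLt; omega⟩ < σ ⟨2 * i + 1, by have := i.isLt; omega⟩) ∧
      (∀ i j : Fin n, i < j →
        σ ⟨2 * i, by have := i.isLt; omega⟩ < σ ⟨2 * j, by have := j.isLt; omega⟩)),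
    (Equiv.Perm.sign σ : ℤ) •
      ∏ i : Fin n, A (σ ⟨2 * i, by have := i.isLt; omega⟩) (σ ⟨2 * i + 1, by have := i.isLt; omega⟩)

open Equiv

section Combinatorics

variable {n : ℕ}

def pairFst (n : ℕ) (i : Fin n) : Fin (2 * n) := ⟨2 * i, by omega⟩

def pairSnd (n : ℕ) (i : Fin n) : Fin (2 * n) := ⟨2 * i + 1, by omega⟩

def pairIdxEquiv (n : ℕ) : Fin n × Fin 2 ≃ Fin (2 * n) :=
  finProdFinEquiv.trans (finCongr (Nat.mul_comm n 2))

@[simp]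
lemma pairIdxEquiv_zero (i : Fin n) : pairIdxEquiv n (i, 0) = pairFst n i := by
  ext; simp [pairIdxEquiv, pairFst]

@[simp]
lemma pairIdxEquiv_one (i : Fin n) : pairIdxEquiv n (i, 1) = pairSnd n i := by
  ext; simp [pairIdxEquiv, pairSnd]; ring

lemma pairFst_injective : Function.Injective (pairFst n) := by
  intro i j h; simpa [pairFst, Fin.ext_iff] using h

lemma pairFst_ne_pairSnd (i j : Fin n) : pairFst n i ≠ pairSnd n j := by
  simp [pairFst, pairSnd, Fin.ext_iff]; omega

lemma prod_eq_prod_pairFst_mul_pairSnd {M : Type*} [CommMonoid M] (f : Fin (2 * n) → M) :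
    ∏ k, f k = ∏ i, f (pairFst n i) * f (pairSnd n i) := by
  rw [← (pairIdxEquiv n).prod_comp, Fintype.prod_prod_type]
  simp [Fin.prod_univ_two]

def pfPerms (n : ℕ) : Finset (Perm (Fin (2 * n))) :=
  univ.filter fun σ => (∀ i, σ (pairFst n i) < σ (pairSnd n i)) ∧
    ∀ i j, i < j → σ (pairFst n i) < σ (pairFst n j)

lemma mem_pfPerms {σ : Perm (Fin (2 * n))} :
    σ ∈ pfPerms n ↔ (∀ i, σ (pairFst n i) < σ (pairSnd n i)) ∧ StrictMono (σ ∘ pairFst n) := by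
  simp [pfPerms, StrictMono]

variable {R : Type*} [CommRing R]

def pfTerm (A : Matrix (Fin (2 * n)) (Fin (2 * n)) R) (σ : Perm (Fin (2 * n))) : R :=
  (Perm.sign σ : ℤ) • ∏ i, A (σ (pairFst n i)) (σ (pairSnd n i))

lemma pf_eq_sum_pfTerm (A : Matrix (Fin (2 * n)) (Fin (2 * n)) R) :
    pf A = ∑ σ ∈ pfPerms n, pfTerm A σ :=
  rfl

/-- Moves the pair `i` to the pair `p i`, swapping its two entries when `s i`. -/
def pairPerm (p : Perm (Fin n)) (s : Fin n → Bool) : Perm (Fin (2 * n)) :=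
  (pairIdxEquiv n).permCongr (prodShear p fun i => if s i then swap 0 1 else 1)

lemma pairPerm_pairIdxEquiv (p : Perm (Fin n)) (s : Fin n → Bool) (i : Fin n) (b : Fin 2) :
    pairPerm p s (pairIdxEquiv n (i, b)) =
      pairIdxEquiv n (p i, if s i then swap 0 1 b else b) := by
  split_ifs <;> simp [pairPerm, permCongr_apply, *]

lemma pairPerm_pairFst (p : Perm (Fin n)) (s : Fin n → Bool) (i : Fin n) :
    pairPerm p s (pairFst n i) = if s i then pairSnd n (p i) else pairFst n (p i) := by
  rw [← pairIdxEquiv_zero, pairPerm_pairIdxEquiv]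
  cases s i <;> simp

lemma pairPerm_pairSnd (p : Perm (Fin n)) (s : Fin n → Bool) (i : Fin n) :
    pairPerm p s (pairSnd n i) = if s i then pairFst n (p i) else pairSnd n (p i) := by
  rw [← pairIdxEquiv_one, pairPerm_pairIdxEquiv]
  cases s i <;> simp

lemma sign_pairPerm (p : Perm (Fin n)) (s : Fin n → Bool) :
    Perm.sign (pairPerm p s) = ∏ i, if s i then -1 else 1 := by
  have hshear : (prodShear p (fun i => if s i then swap 0 1 else 1) : Perm (Fin n × Fin 2)) =
      prodCongrLeft (fun _ => p) * prodCongrRight (fun i => if s i then swap 0 1 else 1) := by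
    ext ⟨i, b⟩ : 1; rfl
  rw [pairPerm, Perm.sign_permCongr, hshear, map_mul, Perm.sign_prodCongrLeft,
    Perm.sign_prodCongrRight, Fin.prod_univ_two, Int.units_mul_self, one_mul]
  refine prod_congr rfl fun i _ => ?_
  split_ifs <;> simp

lemma pfTerm_mul_pairPerm {A : Matrix (Fin (2 * n)) (Fin (2 * n)) R}
    (hA : ∀ j k, A j k = -A k j) (σ : Perm (Fin (2 * n))) (p : Perm (Fin n))
    (s : Fin n → Bool) : pfTerm A (σ * pairPerm p s) = pfTerm A σ := by
  set c : Fin n → R := fun i => if s i then -1 else 1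
  have hc : ∀ i, c i * c i = 1 := fun i => by by_cases h : s i <;> simp [c, h]
  have hsign : ((Perm.sign (pairPerm p s) : ℤ) : R) = ∏ i, c i := by
    simp [sign_pairPerm, c, apply_ite]
  have hentry : ∀ i, A ((σ * pairPerm p s) (pairFst n i)) ((σ * pairPerm p s) (pairSnd n i)) =
      c i * A (σ (pairFst n (p i))) (σ (pairSnd n (p i))) := fun i => by
    by_cases h : s i <;> simp [c, h, pairPerm_pairFst, pairPerm_pairSnd, hA (σ (pairSnd n _))]
  simp only [pfTerm, zsmul_eq_mul, Perm.sign_mul, Units.val_mul, Int.cast_mul, hsign]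
  rw [prod_congr rfl fun i _ => hentry i, prod_mul_distrib,
    Equiv.prod_comp p fun j => A (σ (pairFst n j)) (σ (pairSnd n j)), mul_assoc,
    ← mul_assoc (∏ i, c i), ← prod_mul_distrib, prod_congr rfl fun i _ => hc i, prod_const_one,
    one_mul]

def pairMin (ρ : Perm (Fin (2 * n))) (i : Fin n) : Fin (2 * n) :=
  min (ρ (pairFst n i)) (ρ (pairSnd n i))

def pairFlip (ρ : Perm (Fin (2 * n))) (i : Fin n) : Bool :=
  decide (ρ (pairSnd n i) < ρ (pairFst n i))

section
variable (σ : Perm (Fin (2 * n))) (p : Perm (Fin n)) (s : Fin n → Bool) (i : Fin n)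

lemma lt_iff_eq_pairFlip_mul_pairPerm :
    σ (pairFst n (p i)) < σ (pairSnd n (p i)) ↔ s i = pairFlip (σ * pairPerm p s) i := by
  have hne : σ (pairFst n (p i)) ≠ σ (pairSnd n (p i)) :=
    σ.injective.ne (pairFst_ne_pairSnd _ _)
  by_cases h : s i <;> simp [h, pairFlip, pairPerm_pairFst, pairPerm_pairSnd, hne.le_iff_lt]

lemma pairMin_mul_pairPerm (h : σ (pairFst n (p i)) < σ (pairSnd n (p i))) :
    pairMin (σ * pairPerm p s) i = σ (pairFst n (p i)) := by
  by_cases hs : s i <;> simp [hs, pairMin, pairPerm_pairFst, pairPerm_pairSnd, h.le]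

end

lemma Tuple.eq_sort_of_strictMono {α : Type*} [LinearOrder α] {m : ℕ} {f : Fin m → α}
    {q : Perm (Fin m)} (h : StrictMono (f ∘ q)) : q = Tuple.sort f :=
  Tuple.eq_sort_iff.2 ⟨h.monotone, fun _ _ hij heq => absurd heq (h hij).ne⟩

lemma pairMin_mul_pairPerm_comp_inv {σ : Perm (Fin (2 * n))} {p : Perm (Fin n)}
    (s : Fin n → Bool) (h : ∀ i, σ (pairFst n (p i)) < σ (pairSnd n (p i))) :
    pairMin (σ * pairPerm p s) ∘ ⇑p⁻¹ = σ ∘ pairFst n :=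
  funext fun j => by simpa using pairMin_mul_pairPerm σ p s (p⁻¹ j) (h _)

lemma mul_inv_pairPerm_mem_pfPerms (ρ : Perm (Fin (2 * n))) :
    ρ * (pairPerm (Tuple.sort (pairMin ρ))⁻¹ (pairFlip ρ))⁻¹ ∈ pfPerms n := by
  set p := (Tuple.sort (pairMin ρ))⁻¹
  set σ := ρ * (pairPerm p (pairFlip ρ))⁻¹
  have hρ : σ * pairPerm p (pairFlip ρ) = ρ := inv_mul_cancel_right _ _
  have hlt : ∀ i, σ (pairFst n (p i)) < σ (pairSnd n (p i)) := fun i =>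
    (lt_iff_eq_pairFlip_mul_pairPerm σ p _ i).2 (by rw [hρ])
  have hmin : σ ∘ pairFst n = pairMin ρ ∘ Tuple.sort (pairMin ρ) := by
    rw [← pairMin_mul_pairPerm_comp_inv _ hlt, hρ, inv_inv]
  refine mem_pfPerms.2 ⟨fun j => by simpa using hlt (p⁻¹ j), ?_⟩
  rw [hmin]
  exact (Tuple.monotone_sort _).strictMono_of_injective
    (hmin ▸ σ.injective.comp pairFst_injective)

/-- The inverse reads off the flips from the order inside each pair and the permutation of the
pairs from the order of their minima, which `pfPerms n` lists increasingly. -/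
def pfPermsEquiv (n : ℕ) : pfPerms n × Perm (Fin n) × (Fin n → Bool) ≃ Perm (Fin (2 * n)) where
  toFun x := x.1 * pairPerm x.2.1 x.2.2
  invFun ρ := (⟨_, mul_inv_pairPerm_mem_pfPerms ρ⟩, (Tuple.sort (pairMin ρ))⁻¹, pairFlip ρ)
  left_inv := by
    rintro ⟨⟨σ, hσ⟩, p, s⟩
    have hlt : ∀ i, σ (pairFst n (p i)) < σ (pairSnd n (p i)) := fun i => (mem_pfPerms.1 hσ).1 _
    have hs : pairFlip (σ * pairPerm p s) = s :=
      funext fun i => ((lt_iff_eq_pairFlip_mul_pairPerm σ p s i).1 (hlt i)).symm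
    have hp : (Tuple.sort (pairMin (σ * pairPerm p s)))⁻¹ = p := by
      rw [inv_eq_iff_eq_inv]
      refine (Tuple.eq_sort_of_strictMono ?_).symm
      rw [pairMin_mul_pairPerm_comp_inv s hlt]
      exact (mem_pfPerms.1 hσ).2
    simp [hs, hp]
  right_inv ρ := inv_mul_cancel_right _ _

lemma card_pfPerms_mul : #(pfPerms n) * (n.factorial * 2 ^ n) = (2 * n).factorial := by
  simpa [Fintype.card_perm, mul_comm] using Fintype.card_congr (pfPermsEquiv n)

lemma sum_pfTerm_eq_smul_pf {A : Matrix (Fin (2 * n)) (Fin (2 * n)) R}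
    (hA : ∀ j k, A j k = -A k j) : ∑ ρ, pfTerm A ρ = (n.factorial * 2 ^ n) • pf A := by
  rw [← (pfPermsEquiv n).sum_comp, Fintype.sum_prod_type]
  simp only [pfPermsEquiv, Equiv.coe_fn_mk, pfTerm_mul_pairPerm hA, sum_const]
  rw [← smul_sum, pf_eq_sum_pfTerm, sum_coe_sort]
  simp [Fintype.card_perm]

end Combinatorics

section Integration

variable {X 𝕜 : Type*} [MeasurableSpace X] [RCLike 𝕜] {n : ℕ}

def pairSumEquiv (n : ℕ) : Fin n ⊕ Fin n ≃ Fin (2 * n) :=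
  (boolProdEquivSum (Fin n)).symm.trans
    (((prodComm _ _).trans (prodCongr (Equiv.refl _) finTwoEquiv.symm)).trans (pairIdxEquiv n))

lemma pairSumEquiv_inl (i : Fin n) : pairSumEquiv n (Sum.inl i) = pairFst n i := by
  rw [← pairIdxEquiv_zero]; rfl

lemma pairSumEquiv_inr (i : Fin n) : pairSumEquiv n (Sum.inr i) = pairSnd n i := by
  rw [← pairIdxEquiv_one]; rfl

theorem integral_prod_pairs (μ : Measure X) [SigmaFinite μ] (g : Fin n → X → X → 𝕜) :
    ∫ x, ∏ i, g i (x (pairFst n i)) (x (pairSnd n i)) ∂(Measure.pi fun _ => μ) =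
      ∏ i, ∫ z, g i z.1 z.2 ∂(μ.prod μ) := by
  let T : (Fin n → X × X) ≃ᵐ (Fin (2 * n) → X) :=
    (MeasurableEquiv.arrowProdEquivProdArrow X X (Fin n)).trans
      ((MeasurableEquiv.sumPiEquivProdPi fun _ => X).symm.trans
        (MeasurableEquiv.piCongrLeft (fun _ => X) (pairSumEquiv n)))
  have hT : MeasurePreserving T (Measure.pi fun _ => μ.prod μ) (Measure.pi fun _ => μ) :=
    (measurePreserving_piCongrLeft (fun _ => μ) (pairSumEquiv n)).comp
      ((measurePreserving_sumPiEquivProdPi_symm fun _ => μ).comp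
        (measurePreserving_arrowProdEquivProdArrow X X (Fin n) (fun _ => μ) fun _ => μ))
  have hT_apply (w : Fin n → X × X) (i : Fin n) :
      T w (pairFst n i) = (w i).1 ∧ T w (pairSnd n i) = (w i).2 := by
    simp only [T, MeasurableEquiv.trans_apply, ← pairSumEquiv_inl, ← pairSumEquiv_inr,
      MeasurableEquiv.piCongrLeft_apply_apply]
    exact ⟨rfl, rfl⟩
  rw [← hT.integral_comp']
  simp only [hT_apply]
  exact integral_fintype_prod_eq_prod fun i (z : X × X) => g i z.1 z.2

lemma MeasureTheory.Integrable.mul_prod_kernel {ι κ : Type*} [Fintype κ] {ν : Measure (ι → X)}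
    {f : (ι → X) → 𝕜} (hf : Integrable f ν) {ε : X → X → 𝕜}
    (hε : Measurable (Function.uncurry ε)) {C : ℝ} (hC : ∀ x y, ‖ε x y‖ ≤ C) (a b : κ → ι) :
    Integrable (fun x => f x * ∏ i, ε (x (a i)) (x (b i))) ν := by
  refine hf.mul_bdd (c := C ^ Fintype.card κ) ?_ (ae_of_all _ fun x => ?_)
  · exact (Finset.measurable_prod (f := fun i (x : ι → X) => ε (x (a i)) (x (b i))) _ fun i _ =>
      hε.comp (f := fun x : ι → X => (x (a i), x (b i)))
        ((measurable_pi_apply _).prodMk (measurable_pi_apply _))).aestronglyMeasurable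
  · rw [norm_prod]
    exact (prod_le_prod (fun _ _ => norm_nonneg _) fun _ _ => hC _ _).trans (by simp)

variable {ι : Type*} [Fintype ι] [DecidableEq ι]

lemma integrable_det_of_integrable (μ : Measure X) [SigmaFinite μ] {φ : ι → X → 𝕜}
    (hφ : ∀ j, Integrable (φ j) μ) :
    Integrable (fun x : ι → X => (of fun j k => φ j (x k)).det) (Measure.pi fun _ => μ) := by
  simp only [det_apply, of_apply, Units.smul_def, zsmul_eq_mul]
  exact integrable_finsetSum _ fun τ _ => (Integrable.fintype_prod fun k => hφ (τ k)).const_mul _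

theorem integral_det_mul_comp_perm (μ : Measure X) [SigmaFinite μ] (φ : ι → X → 𝕜)
    (F : (ι → X) → 𝕜) (σ : Perm ι) :
    ∫ x, (of fun j k => φ j (x k)).det * F (x ∘ σ) ∂(Measure.pi fun _ => μ) =
      Perm.sign σ * ∫ x, (of fun j k => φ j (x k)).det * F x ∂(Measure.pi fun _ => μ) := by
  rw [← (measurePreserving_piCongrLeft (fun _ => μ) σ).integral_comp', ← integral_const_mul]
  congr 1 with y
  have hy (k : ι) : MeasurableEquiv.piCongrLeft (fun _ => X) σ y (σ k) = y k :=
    MeasurableEquiv.piCongrLeft_apply_apply (β := fun _ => X) σ y k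
  have hdet : (of fun j k => φ j (MeasurableEquiv.piCongrLeft (fun _ => X) σ y k)).det =
      Perm.sign σ * (of fun j k => φ j (y k)).det := by
    rw [← Perm.sign_inv, ← det_permute']
    congr 1 with j k
    simpa using congrArg (φ j) (hy (σ⁻¹ k))
  rw [hdet, mul_assoc, show MeasurableEquiv.piCongrLeft (fun _ => X) σ y ∘ σ = y from funext hy]

theorem integral_det_mul_prod_pairs (μ : Measure X) [SigmaFinite μ] {φ : Fin (2 * n) → X → 𝕜}
    (hφ : ∀ j, Integrable (φ j) μ) {ε : X → X → 𝕜} (hε : Measurable (Function.uncurry ε))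
    {C : ℝ} (hC : ∀ x y, ‖ε x y‖ ≤ C) :
    ∫ x, (of fun j k => φ j (x k)).det * ∏ i, ε (x (pairFst n i)) (x (pairSnd n i))
        ∂(Measure.pi fun _ => μ) =
      ∑ τ, pfTerm (of fun j k => ∫ z, φ j z.1 * ε z.1 z.2 * φ k z.2 ∂(μ.prod μ)) τ := by
  have hexpand (x : Fin (2 * n) → X) :
      (of fun j k => φ j (x k)).det * ∏ i, ε (x (pairFst n i)) (x (pairSnd n i)) =
        ∑ τ : Perm (Fin (2 * n)), (Perm.sign τ : 𝕜) *
          ((∏ k, φ (τ k) (x k)) * ∏ i, ε (x (pairFst n i)) (x (pairSnd n i))) := by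
    simp [det_apply, sum_mul, mul_assoc, Units.smul_def]
  simp only [hexpand]
  rw [integral_finsetSum _ fun τ _ =>
    ((Integrable.fintype_prod fun k => hφ (τ k)).mul_prod_kernel hε hC _ _).const_mul _]
  refine sum_congr rfl fun τ _ => ?_
  have hregroup (x : Fin (2 * n) → X) :
      (∏ k, φ (τ k) (x k)) * ∏ i, ε (x (pairFst n i)) (x (pairSnd n i)) =
        ∏ i, φ (τ (pairFst n i)) (x (pairFst n i)) * ε (x (pairFst n i)) (x (pairSnd n i)) *
          φ (τ (pairSnd n i)) (x (pairSnd n i)) := by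
    rw [prod_eq_prod_pairFst_mul_pairSnd, ← prod_mul_distrib]
    exact prod_congr rfl fun _ _ => mul_right_comm _ _ _
  simp only [hregroup, integral_const_mul, pfTerm, zsmul_eq_mul, of_apply]
  rw [integral_prod_pairs μ fun i u v => φ (τ (pairFst n i)) u * ε u v * φ (τ (pairSnd n i)) v]

lemma integral_prod_kernel_antisymm (μ : Measure X) [SFinite μ] {ε : X → X → 𝕜}
    (hε : ∀ x y, ε x y = -ε y x) (f g : X → 𝕜) :
    ∫ z, f z.1 * ε z.1 z.2 * g z.2 ∂(μ.prod μ) = -∫ z, g z.1 * ε z.1 z.2 * f z.2 ∂(μ.prod μ) := by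
  rw [← integral_prod_swap, ← integral_neg]
  congr 1 with z
  rw [Prod.fst_swap, Prod.snd_swap, hε z.2]
  ring

lemma integrable_mul_kernel_mul (μ : Measure X) [SFinite μ] {f g : X → 𝕜}
    (hf : Integrable f μ) (hg : Integrable g μ) {ε : X → X → 𝕜}
    (hε : Measurable (Function.uncurry ε)) {C : ℝ} (hC : ∀ x y, ‖ε x y‖ ≤ C) :
    Integrable (fun z : X × X => f z.1 * ε z.1 z.2 * g z.2) (μ.prod μ) := by
  simpa only [mul_right_comm] using
    (hf.mul_prod hg).mul_bdd (g := fun z : X × X => ε z.1 z.2) hε.aestronglyMeasurable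
      (ae_of_all _ fun z => hC z.1 z.2)

end Integration

theorem partition_function {X : Type*} [MeasurableSpace X] (μ : Measure X) [IsFiniteMeasure μ]
    {n : ℕ} (φ : Fin (2 * n) → X → ℂ) (hφ : ∀ j, Integrable (φ j) μ)
    (ε : X → X → ℂ) (hεmeas : Measurable (Function.uncurry ε))
    (hεbd : ∃ Cb : ℝ, ∀ x y, ‖ε x y‖ ≤ Cb)
    (hεanti : ∀ x y, ε x y = -ε y x)
    (M : Matrix (Fin (2 * n)) (Fin (2 * n)) ℂ)
    (hM : ∀ j k, M j k = ∫ x, ∫ y, φ j x * ε x y * φ k y ∂μ ∂μ) :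
    ∫ x : Fin (2 * n) → X,
        (Matrix.det (Matrix.of fun j k => φ j (x k))) * pf (Matrix.of fun j k => ε (x j) (x k))
        ∂(Measure.pi fun _ => μ) =
      ((2 * n).factorial : ℂ) * pf M := by
  obtain ⟨C, hC⟩ := hεbd
  have hM_prod : M = of fun j k => ∫ z, φ j z.1 * ε z.1 z.2 * φ k z.2 ∂(μ.prod μ) := by
    ext j k
    rw [hM, of_apply, integral_prod _ (integrable_mul_kernel_mul μ (hφ j) (hφ k) hεmeas hC)]
  have hM_antisymm : ∀ j k, M j k = -M k j := by
    simp only [hM_prod, of_apply]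
    exact fun j k => integral_prod_kernel_antisymm μ hεanti _ _
  let F : (Fin (2 * n) → X) → ℂ := fun y => ∏ i, ε (y (pairFst n i)) (y (pairSnd n i))
  have hexpand (x : Fin (2 * n) → X) :
      (of fun j k => φ j (x k)).det * pf (of fun j k => ε (x j) (x k)) =
        ∑ σ ∈ pfPerms n, (Perm.sign σ : ℂ) * ((of fun j k => φ j (x k)).det * F (x ∘ σ)) := by
    simp only [pf_eq_sum_pfTerm, pfTerm, mul_sum, zsmul_eq_mul, of_apply, F, Function.comp_apply]
    exact sum_congr rfl fun _ _ => mul_left_comm _ _ _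
  calc _ = ∑ σ ∈ pfPerms n, (Perm.sign σ : ℂ) *
        ∫ x, (of fun j k => φ j (x k)).det * F (x ∘ σ) ∂(Measure.pi fun _ => μ) := by
        simp only [hexpand]
        rw [integral_finsetSum]
        · simp only [integral_const_mul]
        · exact fun σ _ => ((integrable_det_of_integrable μ hφ).mul_prod_kernel hεmeas hC
            (fun i => σ (pairFst n i)) (fun i => σ (pairSnd n i))).const_mul _
    _ = ∑ _σ ∈ pfPerms n, ∫ x, (of fun j k => φ j (x k)).det * F x ∂(Measure.pi fun _ => μ) := by
        simp only [integral_det_mul_comp_perm, ← mul_assoc, ← Int.cast_mul,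
          Int.units_coe_mul_self, Int.cast_one, one_mul]
    _ = ((2 * n).factorial : ℂ) * pf M := by
        rw [sum_const, integral_det_mul_prod_pairs μ hφ hεmeas hC, ← hM_prod,
          sum_pfTerm_eq_smul_pf hM_antisymm, smul_smul, card_pfPerms_mul, nsmul_eq_mul]
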